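/- arXiv:2112.00389 — 3 statements merged into one kernel-verified Lean document; each statement's English description precedes it below -/
import Mathlib

section
/- (Lemma 2.5(i)) Under the setup of Lemma 2.5 (z₁ a type-2 approximation with precision ε of the minimizer of z ↦ g(z) + (1/(2τ))‖z − (z₀ − D⁻¹u)‖²_D, and z₂ a type-1 approximation with precision ε of the minimizer of z ↦ g(z) + (1/(2τ))‖z − (z₀ − D⁻¹v)‖²_D), one has 0 ≤ ‖z₁ − z₂‖_D ≤ (1/2)·(√(2τε) + ‖u − v‖_{D⁻¹} + √(‖u − v‖²_{D⁻¹} + 10τε + 2√(2τε)·‖u − v‖_{D⁻¹})). -/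
/-!
Write `S = ‖z₁ - z₂‖_D`. Test the type-1 condition for `z₂` at the point `z₂ + t (z₁ - z₂)` of
the segment towards `z₁`: convexity of `g` and the `ε`-subgradient inequality of `z₁` evaluated
at `z₂` control the change of `g` along the segment, and the two proximal residuals add up to
`⟨z₁ - z₂, v - u⟩ - S²`. Taking `t = √(2τε) / S` and Cauchy–Schwarz for the pairing of the
`D`- and `D⁻¹`-norms give `S² ≤ (√(2τε) + ‖u - v‖_{D⁻¹}) S + 2τε`, and the claimed bound is the
larger root of this quadratic.
-/

open Matrix

/-- squared M-norm: ⟨x, M x⟩ -/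
noncomputable def sqnorm {d : ℕ} (M : Matrix (Fin d) (Fin d) ℝ) (x : Fin d → ℝ) : ℝ :=
  x ⬝ᵥ M.mulVec x

/-- M-norm: √⟨x, M x⟩ -/
noncomputable def mnorm {d : ℕ} (M : Matrix (Fin d) (Fin d) ℝ) (x : Fin d → ℝ) : ℝ :=
  Real.sqrt (x ⬝ᵥ M.mulVec x)

theorem le_half_add_sqrt_of_sq_le {S b k : ℝ} (h : S ^ 2 ≤ b * S + k) :
    S ≤ (b + √(b ^ 2 + 4 * k)) / 2 := by
  have : 2 * S - b ≤ √(b ^ 2 + 4 * k) := Real.le_sqrt_of_sq_le (by linarith)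
  linarith

theorem sq_le_of_forall_mem_Ioc {S p k : ℝ} (hS : 0 ≤ S) (hk : 0 < k)
    (h : ∀ t ∈ Set.Ioc (0 : ℝ) 1, 2 * t * (S ^ 2 - p) ≤ t ^ 2 * S ^ 2 + k * (1 + t)) :
    S ^ 2 ≤ √k * S + p + k := by
  have ha : 0 < √k := Real.sqrt_pos.2 hk
  have ha2 : √k ^ 2 = k := Real.sq_sqrt hk.le
  rcases le_or_gt S √k with hSa | hSa
  · have := h 1 ⟨one_pos, le_rfl⟩
    nlinarith
  · -- the choice `t = √k / S` balances the terms `t * S ^ 2` and `k / t`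
    have hSpos : 0 < S := ha.trans hSa
    have := h (√k / S) ⟨div_pos ha hSpos, (div_le_one hSpos).2 hSa.le⟩
    field_simp at this
    nlinarith

namespace Matrix

variable {n : Type*} [Fintype n] {D : Matrix n n ℝ}

theorem IsSymm.dotProduct_mulVec_comm (hD : D.IsSymm) (x y : n → ℝ) :
    x ⬝ᵥ D *ᵥ y = y ⬝ᵥ D *ᵥ x := by
  rw [dotProduct_mulVec, ← hD.eq, vecMul_transpose, dotProduct_comm, hD.eq]

theorem PosSemidef.dotProduct_mulVec_sq_le (hD : D.PosSemidef) (x y : n → ℝ) :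
    (x ⬝ᵥ D *ᵥ y) ^ 2 ≤ (x ⬝ᵥ D *ᵥ x) * (y ⬝ᵥ D *ᵥ y) := by
  classical
  simpa only [toBilin'_apply'] using
    LinearMap.BilinForm.apply_sq_le_of_symm (toBilin' D)
      (fun x ↦ by simpa only [toBilin'_apply', star_trivial] using hD.dotProduct_mulVec_nonneg x)
      ⟨fun x y ↦ by simpa only [toBilin'_apply', RingHom.id_apply] using
        (isHermitian_iff_isSymm.1 hD.isHermitian).dotProduct_mulVec_comm x y⟩ x y

theorem PosDef.mulVec_inv_mulVec [DecidableEq n] (hD : D.PosDef) (x : n → ℝ) :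
    D *ᵥ (D⁻¹ *ᵥ x) = x := by
  rw [mulVec_mulVec, mul_nonsing_inv _ (isUnit_iff_ne_zero.2 hD.det_pos.ne'), one_mulVec]

end Matrix

section MNorm

variable {d : ℕ} {D : Matrix (Fin d) (Fin d) ℝ}

theorem sqnorm_nonneg (hD : D.PosSemidef) (x : Fin d → ℝ) : 0 ≤ sqnorm D x := by
  unfold sqnorm
  simpa only [star_trivial] using hD.dotProduct_mulVec_nonneg x

theorem mnorm_sq (hD : D.PosSemidef) (x : Fin d → ℝ) : mnorm D x ^ 2 = sqnorm D x :=
  Real.sq_sqrt (sqnorm_nonneg hD x)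

theorem mnorm_sub_comm (x y : Fin d → ℝ) : mnorm D (x - y) = mnorm D (y - x) := by
  rw [← neg_sub, mnorm, mnorm, mulVec_neg, dotProduct_neg, neg_dotProduct, neg_neg]

theorem sqnorm_add_smul (hD : D.IsSymm) (y s : Fin d → ℝ) (t : ℝ) :
    sqnorm D (y + t • s) = sqnorm D y + 2 * t * (s ⬝ᵥ D *ᵥ y) + t ^ 2 * sqnorm D s := by
  simp only [sqnorm, mulVec_add, mulVec_smul, dotProduct_add, add_dotProduct, dotProduct_smul,
    smul_dotProduct, smul_eq_mul, hD.dotProduct_mulVec_comm y s]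
  ring

theorem dotProduct_le_mnorm_mul_mnorm_inv (hD : D.PosDef) (x y : Fin d → ℝ) :
    x ⬝ᵥ y ≤ mnorm D x * mnorm D⁻¹ y := by
  have hsq : (x ⬝ᵥ y) ^ 2 ≤ sqnorm D x * sqnorm D⁻¹ y := by
    unfold sqnorm
    simpa only [hD.mulVec_inv_mulVec, dotProduct_comm _ y] using
      hD.posSemidef.dotProduct_mulVec_sq_le x (D⁻¹ *ᵥ y)
  calc x ⬝ᵥ y ≤ √((x ⬝ᵥ y) ^ 2) := Real.le_sqrt_of_sq_le le_rfl
    _ ≤ √(sqnorm D x * sqnorm D⁻¹ y) := Real.sqrt_le_sqrt hsq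
    _ = mnorm D x * mnorm D⁻¹ y := Real.sqrt_mul (sqnorm_nonneg hD.posSemidef x) _

end MNorm

section InexactProx

variable {d : ℕ} {D : Matrix (Fin d) (Fin d) ℝ} {τ ε t : ℝ} {g : (Fin d → ℝ) → ℝ}
  {w₁ w₂ z₁ z₂ : Fin d → ℝ}

theorem inexact_prox_segment_bound (hD : D.IsSymm) (hτ : 0 < τ)
    (hconv : ConvexOn ℝ Set.univ g)
    (h1 : ∀ x, g x ≥ g z₁ + ((1 / τ) • D *ᵥ (w₁ - z₁)) ⬝ᵥ (x - z₁) - ε)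
    (h2 : ∀ x, g x + (1 / (2 * τ)) * sqnorm D (x - w₂)
        ≥ g z₂ + (1 / (2 * τ)) * sqnorm D (z₂ - w₂) - ε)
    (ht : t ∈ Set.Ioc 0 1) :
    2 * t * (sqnorm D (z₁ - z₂) - (z₁ - z₂) ⬝ᵥ D *ᵥ (w₁ - w₂))
      ≤ t ^ 2 * sqnorm D (z₁ - z₂) + 2 * τ * ε * (1 + t) := by
  set s := z₁ - z₂ with hs
  have hconvex : g (z₂ + t • s) ≤ g z₂ + t * (g z₁ - g z₂) := by
    have := hconv.2 (Set.mem_univ z₁) (Set.mem_univ z₂) ht.1.le (sub_nonneg.2 ht.2)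
      (add_sub_cancel t 1)
    rw [smul_eq_mul, smul_eq_mul] at this
    rw [show z₂ + t • s = t • z₁ + (1 - t) • z₂ by rw [hs]; module]
    linarith
  have hprox := h2 (z₂ + t • s)
  rw [show z₂ + t • s - w₂ = (z₂ - w₂) + t • s by abel, sqnorm_add_smul hD] at hprox
  have hsubgrad : g z₁ - g z₂ ≤ (1 / τ) * (s ⬝ᵥ D *ᵥ (w₁ - z₁)) + ε := by
    have := h1 z₂
    rw [← neg_sub z₁ z₂, dotProduct_neg, smul_dotProduct, dotProduct_comm, smul_eq_mul] at this
    linarith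
  have hsplit : s ⬝ᵥ D *ᵥ (w₁ - z₁) + s ⬝ᵥ D *ᵥ (z₂ - w₂)
      = s ⬝ᵥ D *ᵥ (w₁ - w₂) - sqnorm D s := by
    rw [← dotProduct_add, ← mulVec_add, sqnorm, ← dotProduct_sub, ← mulVec_sub, hs]
    congr 2; abel
  have key : -ε ≤ t * ((1 / τ) * (s ⬝ᵥ D *ᵥ (w₁ - z₁)) + ε)
      + (1 / (2 * τ)) * (2 * t * (s ⬝ᵥ D *ᵥ (z₂ - w₂)) + t ^ 2 * sqnorm D s) := by
    linarith [mul_le_mul_of_nonneg_left hsubgrad ht.1.le]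
  field_simp at key
  linear_combination key + 2 * t * hsplit

theorem sq_mnorm_sub_le_of_inexact_prox (hD : D.PosSemidef) (hτ : 0 < τ) (hε : 0 < ε)
    (hconv : ConvexOn ℝ Set.univ g)
    (h1 : ∀ x, g x ≥ g z₁ + ((1 / τ) • D *ᵥ (w₁ - z₁)) ⬝ᵥ (x - z₁) - ε)
    (h2 : ∀ x, g x + (1 / (2 * τ)) * sqnorm D (x - w₂)
        ≥ g z₂ + (1 / (2 * τ)) * sqnorm D (z₂ - w₂) - ε) :
    mnorm D (z₁ - z₂) ^ 2 ≤ √(2 * τ * ε) * mnorm D (z₁ - z₂)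
      + (z₁ - z₂) ⬝ᵥ D *ᵥ (w₁ - w₂) + 2 * τ * ε := by
  refine sq_le_of_forall_mem_Ioc (Real.sqrt_nonneg _) (by positivity) fun t ht ↦ ?_
  rw [mnorm_sq hD]
  exact inexact_prox_segment_bound (isHermitian_iff_isSymm.1 hD.isHermitian) hτ hconv h1 h2 ht

end InexactProx

/-- Lemma 2.5(i): bound on the D-distance between the two inexact proximal points. -/
theorem dist_bound {d : ℕ}
    (D : Matrix (Fin d) (Fin d) ℝ) (hD : D.PosDef)
    (τ : ℝ) (hτ : 0 < τ) (ε : ℝ) (hε : 0 < ε)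
    (g : (Fin d → ℝ) → ℝ) (hconv : ConvexOn ℝ Set.univ g)
    (z₀ u v z₁ z₂ : Fin d → ℝ)
    (h1 : ∀ x, g x ≥ g z₁ +
        ((1 / τ) • D.mulVec (z₀ - D⁻¹.mulVec u - z₁)) ⬝ᵥ (x - z₁) - ε)
    (h2 : ∀ x, g x + (1 / (2 * τ)) * sqnorm D (x - (z₀ - D⁻¹.mulVec v))
        ≥ g z₂ + (1 / (2 * τ)) * sqnorm D (z₂ - (z₀ - D⁻¹.mulVec v)) - ε) :
    0 ≤ mnorm D (z₁ - z₂) ∧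
      mnorm D (z₁ - z₂) ≤ (1 / 2) * (Real.sqrt (2 * τ * ε) + mnorm D⁻¹ (u - v) +
        Real.sqrt ((mnorm D⁻¹ (u - v)) ^ 2 + 10 * τ * ε +
          2 * Real.sqrt (2 * τ * ε) * mnorm D⁻¹ (u - v))) := by
  set S := mnorm D (z₁ - z₂)
  set c := mnorm D⁻¹ (u - v)
  have hcross : (z₁ - z₂) ⬝ᵥ D *ᵥ ((z₀ - D⁻¹ *ᵥ u) - (z₀ - D⁻¹ *ᵥ v)) ≤ S * c := by
    rw [sub_sub_sub_cancel_left, ← mulVec_sub, hD.mulVec_inv_mulVec]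
    exact (dotProduct_le_mnorm_mul_mnorm_inv hD _ _).trans_eq (by rw [mnorm_sub_comm v u])
  have hquad : S ^ 2 ≤ (√(2 * τ * ε) + c) * S + 2 * τ * ε := by
    linarith [sq_mnorm_sub_le_of_inexact_prox hD.posSemidef hτ hε hconv h1 h2]
  have harg : c ^ 2 + 10 * τ * ε + 2 * √(2 * τ * ε) * c
      = (√(2 * τ * ε) + c) ^ 2 + 4 * (2 * τ * ε) := by
    linear_combination -Real.sq_sqrt (by positivity : 0 ≤ 2 * τ * ε)
  refine ⟨Real.sqrt_nonneg _, ?_⟩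
  rw [harg]
  linarith [le_half_add_sqrt_of_sq_le hquad]
end

section
/- (Per-iteration inequality (3.9a)) Fix τ, λ > 0, ε, δ ≥ 0 and points xᵏ, xᵏ⁺¹ ∈ ℝⁿ, ȳᵏ, yᵏ⁺¹, ȳᵏ⁺¹ ∈ ℝᵐ satisfying conditions (i), (ii), (iii) of one Algorithm 1 iteration with stepsizes τ, λ and tolerances ε, δ. Then for all x ∈ ℝⁿ and y ∈ ℝᵐ: L(xᵏ⁺¹, y) − L(x, yᵏ⁺¹) ≤ (1/(2τ))(‖y − ȳᵏ‖²_S − ‖y − ȳᵏ⁺¹‖²_S) + (1/(2λ))(‖x − xᵏ‖²_{AᵀRA} − ‖x − xᵏ⁺¹‖²_{AᵀRA}) + √(ε/τ)·‖y − ȳᵏ⁺¹‖_S + 2ε + δ − (1/(2λ))⟨A(xᵏ − xᵏ⁺¹), (R − τλS⁻¹)A(xᵏ − xᵏ⁺¹)⟩ − (1/(2τ))‖ȳᵏ − yᵏ⁺¹‖²_S. -/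
open Matrix Finset

/-- The Lagrangian L(x,y) = f(x) + ⟨Ax, y⟩ − g(y). -/
noncomputable def Lag {n m : ℕ} (f : (Fin n → ℝ) → ℝ) (g : (Fin m → ℝ) → ℝ)
    (A : Matrix (Fin m) (Fin n) ℝ) (x : Fin n → ℝ) (y : Fin m → ℝ) : ℝ :=
  f x + A.mulVec x ⬝ᵥ y - g y

open Filter Topology

/-!
Conditions (ii) at `x` and (i) at `ȳᵏ⁺¹`, rewritten with the three-point identity
`2⟨a - b, M (c - b)⟩ = ‖c - b‖²_M + ‖a - b‖²_M - ‖a - c‖²_M`, control the `f`-part and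
`g(yᵏ⁺¹)`. Condition (iii) says that `ȳᵏ⁺¹` minimises the prox objective
`g - ⟨Axᵏ⁺¹, ·⟩ + ‖· - ȳᵏ‖²_S / (2τ)` up to `ε/2`; comparing with the points of the segment
towards `y` shows that this objective still grows quadratically away from `ȳᵏ⁺¹`, up to an error
`√(ε/τ) ‖y - ȳᵏ⁺¹‖_S + ε`. The remaining coupling term `⟨A(xᵏ - xᵏ⁺¹), yᵏ⁺¹ - ȳᵏ⁺¹⟩` is
absorbed by Young's inequality for the dual pair of norms `‖·‖_{S⁻¹}`, `‖·‖_S`.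
-/

lemma Matrix.IsSymm.dotProduct_mulVec_comm_s10 {ι : Type*} [Fintype ι] {M : Matrix ι ι ℝ}
    (hM : M.IsSymm) (u v : ι → ℝ) : u ⬝ᵥ M *ᵥ v = v ⬝ᵥ M *ᵥ u := by
  rw [dotProduct_mulVec, dotProduct_comm, ← vecMul_transpose, hM.eq]

lemma Matrix.PosDef.isSymm {ι : Type*} [Fintype ι] {M : Matrix ι ι ℝ} (hM : M.PosDef) :
    M.IsSymm :=
  isHermitian_iff_isSymm.mp hM.isHermitian

lemma Matrix.transpose_mul_mul_mulVec_dotProduct {ι κ : Type*} [Fintype ι] [Fintype κ]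
    (A : Matrix κ ι ℝ) (R : Matrix κ κ ℝ) (w z : ι → ℝ) :
    (Aᵀ * R * A) *ᵥ w ⬝ᵥ z = A *ᵥ z ⬝ᵥ R *ᵥ (A *ᵥ w) := by
  rw [dotProduct_comm, Matrix.mul_assoc, ← mulVec_mulVec, ← mulVec_mulVec, dotProduct_mulVec,
    vecMul_transpose]

section sqnorm

variable {d : ℕ}

lemma sqnorm_sub_comm (M : Matrix (Fin d) (Fin d) ℝ) (u v : Fin d → ℝ) :
    sqnorm M (u - v) = sqnorm M (v - u) := by
  rw [← neg_sub, sqnorm, sqnorm, mulVec_neg, neg_dotProduct, dotProduct_neg, neg_neg]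

lemma sqnorm_add_smul_s10 (M : Matrix (Fin d) (Fin d) ℝ) (p q : Fin d → ℝ) (t : ℝ) :
    sqnorm M (p + t • q)
      = (1 - t) * sqnorm M p + t * sqnorm M (p + q) - t * (1 - t) * sqnorm M q := by
  simp only [sqnorm, mulVec_add, mulVec_smul, add_dotProduct, dotProduct_add, smul_dotProduct,
    dotProduct_smul, smul_eq_mul]
  ring

lemma dotProduct_sub_smul_mulVec (M N : Matrix (Fin d) (Fin d) ℝ) (c : ℝ) (u : Fin d → ℝ) :
    u ⬝ᵥ (M - c • N) *ᵥ u = sqnorm M u - c * sqnorm N u := by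
  rw [sub_mulVec, dotProduct_sub, smul_mulVec, dotProduct_smul, smul_eq_mul, sqnorm, sqnorm]

lemma sqnorm_nonneg_s10 {M : Matrix (Fin d) (Fin d) ℝ} (hM : M.PosSemidef) (u : Fin d → ℝ) :
    0 ≤ sqnorm M u :=
  hM.dotProduct_mulVec_nonneg u

lemma mnorm_sq_s10 {M : Matrix (Fin d) (Fin d) ℝ} (hM : M.PosSemidef) (u : Fin d → ℝ) :
    mnorm M u ^ 2 = sqnorm M u :=
  Real.sq_sqrt (sqnorm_nonneg_s10 hM u)

lemma sub_dotProduct_mulVec_sub {M : Matrix (Fin d) (Fin d) ℝ} (hM : M.IsSymm)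
    (a b c : Fin d → ℝ) :
    (a - b) ⬝ᵥ M *ᵥ (c - b) = (sqnorm M (c - b) + sqnorm M (a - b) - sqnorm M (a - c)) / 2 := by
  simp only [sqnorm, mulVec_sub, sub_dotProduct, dotProduct_sub]
  linear_combination (hM.dotProduct_mulVec_comm_s10 a c - hM.dotProduct_mulVec_comm_s10 a b
    - hM.dotProduct_mulVec_comm_s10 b c) / 2

lemma dotProduct_le_sqnorm_inv_add_sqnorm {M : Matrix (Fin d) (Fin d) ℝ} (hM : M.PosDef)
    {τ : ℝ} (hτ : 0 < τ) (u v : Fin d → ℝ) :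
    u ⬝ᵥ v ≤ τ / 2 * sqnorm M⁻¹ u + 1 / (2 * τ) * sqnorm M v := by
  have hMM : M *ᵥ (M⁻¹ *ᵥ u) = u := by
    rw [mulVec_mulVec, mul_nonsing_inv M (isUnit_iff_ne_zero.2 hM.det_pos.ne'), one_mulVec]
  have hsq : sqnorm M (v - τ • M⁻¹ *ᵥ u)
      = sqnorm M v - 2 * τ * (u ⬝ᵥ v) + τ ^ 2 * sqnorm M⁻¹ u := by
    have hcomm := hM.isSymm.dotProduct_mulVec_comm_s10 (M⁻¹ *ᵥ u) v
    rw [hMM] at hcomm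
    simp only [sqnorm, mulVec_sub, mulVec_smul, hMM, sub_dotProduct, dotProduct_sub,
      smul_dotProduct, dotProduct_smul, smul_eq_mul] at hcomm ⊢
    rw [hcomm, dotProduct_comm v u, dotProduct_comm (M⁻¹ *ᵥ u) u]
    ring
  have hdiv : 0 ≤ (sqnorm M v - 2 * τ * (u ⬝ᵥ v) + τ ^ 2 * sqnorm M⁻¹ u) / (2 * τ) :=
    div_nonneg (hsq ▸ sqnorm_nonneg_s10 hM.posSemidef _) (by positivity)
  have hexpand : (sqnorm M v - 2 * τ * (u ⬝ᵥ v) + τ ^ 2 * sqnorm M⁻¹ u) / (2 * τ)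
      = τ / 2 * sqnorm M⁻¹ u + 1 / (2 * τ) * sqnorm M v - u ⬝ᵥ v := by
    field_simp; ring
  linarith

lemma ConvexOn.add_sqnorm_segment_le {h : (Fin d → ℝ) → ℝ} (hh : ConvexOn ℝ Set.univ h)
    (M : Matrix (Fin d) (Fin d) ℝ) (κ : ℝ) (b w y : Fin d → ℝ) {t : ℝ} (ht0 : 0 ≤ t)
    (ht1 : t ≤ 1) :
    h (w + t • (y - w)) + κ * sqnorm M (w + t • (y - w) - b)
      ≤ (1 - t) * (h w + κ * sqnorm M (w - b)) + t * (h y + κ * sqnorm M (y - b))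
        - t * (1 - t) * κ * sqnorm M (y - w) := by
  have hconv : h (w + t • (y - w)) ≤ (1 - t) * h w + t * h y := by
    rw [show w + t • (y - w) = (1 - t) • w + t • y by module]
    exact hh.2 (Set.mem_univ _) (Set.mem_univ _) (by linarith) ht0 (by ring)
  have hquad : sqnorm M (w + t • (y - w) - b)
      = (1 - t) * sqnorm M (w - b) + t * sqnorm M (y - b) - t * (1 - t) * sqnorm M (y - w) := by
    rw [show w + t • (y - w) - b = (w - b) + t • (y - w) by abel, sqnorm_add_smul_s10,
      show w - b + (y - w) = y - b by abel]
  rw [hquad]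
  linear_combination hconv

end sqnorm

/- The hypothesis reads `C ≥ (1 - t) q - ε / (2t)`. For `ε > 0` take `t = τσ / (d + τσ)`, which
balances the two error terms; for `ε = 0` let `t → 0⁺`. -/
lemma sub_sqrt_mul_sub_le_of_forall_mem_Ioc {C d τ ε : ℝ} (hd : 0 ≤ d) (hτ : 0 < τ)
    (hε : 0 ≤ ε)
    (h : ∀ t ∈ Set.Ioc (0 : ℝ) 1, t * (1 - t) * (1 / (2 * τ) * d ^ 2) - ε / 2 ≤ t * C) :
    1 / (2 * τ) * d ^ 2 - √(ε / τ) * d - ε ≤ C := by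
  set q := 1 / (2 * τ) * d ^ 2
  rcases hε.eq_or_lt with rfl | hε
  · suffices q ≤ C by simpa using this
    have hlim : Tendsto (fun t : ℝ => (1 - t) * q) (𝓝[>] 0) (𝓝 q) := by
      have := ((continuous_const.sub continuous_id).mul continuous_const).tendsto (0 : ℝ)
        (f := fun t : ℝ => (1 - t) * q)
      simpa using this.mono_left nhdsWithin_le_nhds
    refine le_of_tendsto hlim ?_
    filter_upwards [Ioo_mem_nhdsGT one_pos] with t ht
    have hmain := h t ⟨ht.1, ht.2.le⟩
    exact le_of_mul_le_mul_left (by linarith) ht.1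
  · set σ := √(ε / τ)
    have hσ : 0 < σ := Real.sqrt_pos.2 (div_pos hε hτ)
    have hεσ : ε = τ * σ ^ 2 := by
      rw [Real.sq_sqrt (div_pos hε hτ).le]; field_simp
    have hp : 0 < d + τ * σ := by positivity
    set t := τ * σ / (d + τ * σ)
    have ht0 : 0 < t := by positivity
    have htp : t * (d + τ * σ) = τ * σ := div_mul_cancel₀ _ hp.ne'
    have hlin : t * σ * d + t * ε = ε := by rw [hεσ]; linear_combination σ * htp
    have hsq : t ^ 2 * q ≤ ε / 2 := by
      have htd : t * d ≤ τ * σ :=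
        htp ▸ mul_le_mul_of_nonneg_left (le_add_of_nonneg_right (by positivity)) ht0.le
      calc t ^ 2 * q = (t * d) ^ 2 / (2 * τ) := by ring
        _ ≤ (τ * σ) ^ 2 / (2 * τ) := by gcongr
        _ = ε / 2 := by rw [hεσ]; field_simp
    have hmain := h t ⟨ht0, by rw [div_le_one hp]; linarith⟩
    refine le_of_mul_le_mul_left ?_ ht0
    linarith

theorem ConvexOn.add_sqnorm_ge_of_approx_min {d : ℕ} {M : Matrix (Fin d) (Fin d) ℝ}
    {h : (Fin d → ℝ) → ℝ} (hh : ConvexOn ℝ Set.univ h) (hM : M.PosSemidef) {τ ε : ℝ}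
    (hτ : 0 < τ) (hε : 0 ≤ ε) {b w : Fin d → ℝ}
    (hw : ∀ z, h z + 1 / (2 * τ) * sqnorm M (z - b)
      ≥ h w + 1 / (2 * τ) * sqnorm M (w - b) - ε / 2)
    (y : Fin d → ℝ) :
    h y + 1 / (2 * τ) * sqnorm M (y - b)
      ≥ h w + 1 / (2 * τ) * sqnorm M (w - b) + 1 / (2 * τ) * sqnorm M (y - w)
        - √(ε / τ) * mnorm M (y - w) - ε := by
  have key := sub_sqrt_mul_sub_le_of_forall_mem_Ioc (d := mnorm M (y - w))
    (C := (h y + 1 / (2 * τ) * sqnorm M (y - b)) - (h w + 1 / (2 * τ) * sqnorm M (w - b)))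
    (Real.sqrt_nonneg _) hτ hε fun t ht => by
      have hseg := hh.add_sqnorm_segment_le M (1 / (2 * τ)) b w y ht.1.le ht.2
      have hmin := hw (w + t • (y - w))
      rw [mnorm_sq_s10 hM]
      linarith
  rw [mnorm_sq_s10 hM] at key
  linarith

theorem per_iteration_ineq_general {n m : ℕ}
    (f : (Fin n → ℝ) → ℝ) (g : (Fin m → ℝ) → ℝ)
    (hg : ConvexOn ℝ Set.univ g)
    (A : Matrix (Fin m) (Fin n) ℝ)
    (S R : Matrix (Fin m) (Fin m) ℝ) (hS : S.PosDef) (hR : R.PosDef)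
    (τ lam : ℝ) (hτ : 0 < τ) (hlam : 0 < lam)
    (ε δ : ℝ) (hε : 0 ≤ ε)
    (xk xk1 : Fin n → ℝ) (ybark yk1 ybark1 : Fin m → ℝ)
    (hi : ∀ y, g y ≥ g yk1 +
        ((1 / τ) • S.mulVec (ybark - yk1) + A.mulVec xk) ⬝ᵥ (y - yk1) - ε / 2)
    (hii : ∀ x, f x + A.mulVec x ⬝ᵥ yk1
        ≥ f xk1 + A.mulVec xk1 ⬝ᵥ yk1
          + ((1 / lam) • (Aᵀ * R * A).mulVec (xk - xk1)) ⬝ᵥ (x - xk1) - δ)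
    (hiii : ∀ y, g y - A.mulVec xk1 ⬝ᵥ y + (1 / (2 * τ)) * sqnorm S (y - ybark)
        ≥ g ybark1 - A.mulVec xk1 ⬝ᵥ ybark1
          + (1 / (2 * τ)) * sqnorm S (ybark1 - ybark) - ε / 2) :
    ∀ (x : Fin n → ℝ) (y : Fin m → ℝ),
      Lag f g A xk1 y - Lag f g A x yk1
        ≤ (1 / (2 * τ)) * (sqnorm S (y - ybark) - sqnorm S (y - ybark1))
          + (1 / (2 * lam)) * (sqnorm R (A.mulVec (x - xk)) - sqnorm R (A.mulVec (x - xk1)))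
          + Real.sqrt (ε / τ) * mnorm S (y - ybark1)
          + 2 * ε + δ
          - (1 / (2 * lam)) *
              (A.mulVec (xk - xk1) ⬝ᵥ (R - (τ * lam) • S⁻¹).mulVec (A.mulVec (xk - xk1)))
          - (1 / (2 * τ)) * sqnorm S (ybark - yk1) := by
  intro x y
  have primal := hii x
  rw [smul_dotProduct, transpose_mul_mul_mulVec_dotProduct, mulVec_sub, mulVec_sub,
    sub_dotProduct_mulVec_sub hR.isSymm] at primal
  have dual := hi ybark1
  rw [add_dotProduct, smul_dotProduct, dotProduct_comm (S *ᵥ _),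
    sub_dotProduct_mulVec_sub hS.isSymm] at dual
  have hprox_convex : ConvexOn ℝ Set.univ (fun z => g z - A *ᵥ xk1 ⬝ᵥ z) :=
    hg.sub ((dotProductBilin ℝ ℝ (A *ᵥ xk1)).concaveOn convex_univ)
  have prox := hprox_convex.add_sqnorm_ge_of_approx_min hS.posSemidef hτ hε hiii y
  have young := dotProduct_le_sqnorm_inv_add_sqnorm hS hτ (A *ᵥ (xk - xk1)) (yk1 - ybark1)
  rw [sqnorm_sub_comm S yk1] at young
  have hcancel (p q : ℝ) :
      1 / (2 * lam) * (p - τ * lam * q) = 1 / (2 * lam) * p - τ / 2 * q := by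
    field_simp
  rw [dotProduct_sub_smul_mulVec, hcancel]
  simp only [Lag, mulVec_sub, sub_dotProduct, dotProduct_sub, smul_eq_mul] at primal dual young ⊢
  -- the ε-budget of the sum is ε / 2 + ε, which leaves slack ε / 2
  linear_combination primal + dual + prox + young + hε / 2

/-- Per-iteration inequality (3.9a). -/
theorem per_iteration_ineq {n m : ℕ}
    (f : (Fin n → ℝ) → ℝ) (g : (Fin m → ℝ) → ℝ)
    (hf : ConvexOn ℝ Set.univ f) (hg : ConvexOn ℝ Set.univ g)
    (A : Matrix (Fin m) (Fin n) ℝ)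
    (S R : Matrix (Fin m) (Fin m) ℝ) (hS : S.PosDef) (hR : R.PosDef)
    (τ lam : ℝ) (hτ : 0 < τ) (hlam : 0 < lam)
    (ε δ : ℝ) (hε : 0 ≤ ε) (hδ : 0 ≤ δ)
    (xk xk1 : Fin n → ℝ) (ybark yk1 ybark1 : Fin m → ℝ)
    (hi : ∀ y, g y ≥ g yk1 +
        ((1 / τ) • S.mulVec (ybark - yk1) + A.mulVec xk) ⬝ᵥ (y - yk1) - ε / 2)
    (hii : ∀ x, f x + A.mulVec x ⬝ᵥ yk1
        ≥ f xk1 + A.mulVec xk1 ⬝ᵥ yk1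
          + ((1 / lam) • (Aᵀ * R * A).mulVec (xk - xk1)) ⬝ᵥ (x - xk1) - δ)
    (hiii : ∀ y, g y - A.mulVec xk1 ⬝ᵥ y + (1 / (2 * τ)) * sqnorm S (y - ybark)
        ≥ g ybark1 - A.mulVec xk1 ⬝ᵥ ybark1
          + (1 / (2 * τ)) * sqnorm S (ybark1 - ybark) - ε / 2) :
    ∀ (x : Fin n → ℝ) (y : Fin m → ℝ),
      Lag f g A xk1 y - Lag f g A x yk1
        ≤ (1 / (2 * τ)) * (sqnorm S (y - ybark) - sqnorm S (y - ybark1))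
          + (1 / (2 * lam)) * (sqnorm R (A.mulVec (x - xk)) - sqnorm R (A.mulVec (x - xk1)))
          + Real.sqrt (ε / τ) * mnorm S (y - ybark1)
          + 2 * ε + δ
          - (1 / (2 * lam)) *
              (A.mulVec (xk - xk1) ⬝ᵥ (R - (τ * lam) • S⁻¹).mulVec (A.mulVec (xk - xk1)))
          - (1 / (2 * τ)) * sqnorm S (ybark - yk1) :=
  per_iteration_ineq_general f g hg A S R hS hR τ lam hτ hlam ε δ hε xk xk1 ybark yk1 ybark1 hi hii
    hiii
end

section
/- (Lemma th3.1, main ergodic bound) Let sequences (xᵏ), (yᵏ), (ȳᵏ) be generated by Algorithm 1 (conditions (i)–(iii) at every iteration) with nondecreasing positive stepsizes (τ_k), (λ_k) such that R − τ_kλ_kS⁻¹ is positive definite for every k, and let (x*, y*) be a saddle point of L. Then for every N ≥ 1: L(x̂ᴺ, y*) − L(x*, ŷᴺ) ≤ (1/(2Nτ_N))·[√(τ_N/τ_0)·‖y* − ȳ⁰‖_S + √(τ_N/λ_0)·‖x* − x⁰‖_{AᵀRA} + 2A_N + √(2B_N)]², where A_N = τ_N·Σ_{k=0}^{N−1} √(ε_{k+1}/τ_k)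 and B_N = τ_N·Σ_{k=0}^{N−1} (2ε_{k+1} + δ_{k+1}). -/
open Matrix Finset Filter

/-- (x*, y*) is a saddle point of L. -/
def IsSaddle {n m : ℕ} (f : (Fin n → ℝ) → ℝ) (g : (Fin m → ℝ) → ℝ)
    (A : Matrix (Fin m) (Fin n) ℝ) (xs : Fin n → ℝ) (ys : Fin m → ℝ) : Prop :=
  ∀ (x : Fin n → ℝ) (y : Fin m → ℝ),
    Lag f g A xs y ≤ Lag f g A xs ys ∧ Lag f g A xs ys ≤ Lag f g A x ys

/-!
Each iteration satisfies a perturbed descent inequality for the gap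
`L(xᵏ⁺¹, y*) - L(x*, yᵏ⁺¹) ≥ 0`, with the energies `vₖ = ‖y* - ȳᵏ‖²_S`, `wₖ = ‖x* - xᵏ‖²_{AᵀRA}`:
the primal and dual ε-subgradient conditions are expanded by the polarization identity, the
coupling term is absorbed by Young's inequality thanks to `τₖ λₖ S⁻¹ ≤ R`, and the approximate
minimality of `ȳᵏ⁺¹` still gives quadratic growth, up to an error `√(ε/τ) ‖y* - ȳᵏ⁺¹‖_S + ε/2`.
Summing by parts with nondecreasing stepsizes and dropping the nonnegative gaps yields a quadratic
recursion for `‖y* - ȳᵏ‖_S`, bounded by a discrete Bihari argument; Jensen's inequality for the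
convex-concave `L` passes from the summed gaps to the ergodic averages.
-/

namespace Matrix

variable {m : ℕ} {M : Matrix (Fin m) (Fin m) ℝ}

lemma IsHermitian.dotProduct_mulVec_comm (hM : M.IsHermitian) (u v : Fin m → ℝ) :
    u ⬝ᵥ M *ᵥ v = v ⬝ᵥ M *ᵥ u := by
  rw [← dotProduct_transpose_mulVec, ← conjTranspose_eq_transpose_of_trivial, hM.eq]

lemma PosSemidef.sqnorm_nonneg (hM : M.PosSemidef) (x : Fin m → ℝ) : 0 ≤ sqnorm M x :=
  hM.dotProduct_mulVec_nonneg x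

lemma sqnorm_neg (x : Fin m → ℝ) : sqnorm M (-x) = sqnorm M x := by
  simp [sqnorm, mulVec_neg]

lemma sqnorm_sub_comm (x y : Fin m → ℝ) : sqnorm M (x - y) = sqnorm M (y - x) := by
  rw [← neg_sub, sqnorm_neg]

lemma IsHermitian.two_mul_dotProduct_mulVec (hM : M.IsHermitian) (u v : Fin m → ℝ) :
    2 * (u ⬝ᵥ M *ᵥ v) = sqnorm M u + sqnorm M v - sqnorm M (v - u) := by
  have huv := hM.dotProduct_mulVec_comm u v
  simp only [sqnorm, mulVec_sub, dotProduct_sub, sub_dotProduct, huv]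
  ring

lemma IsHermitian.sqnorm_sub_add_smul (hM : M.IsHermitian) (u v : Fin m → ℝ) (t : ℝ) :
    sqnorm M ((1 - t) • u + t • v)
      = (1 - t) * sqnorm M u + t * sqnorm M v - t * (1 - t) * sqnorm M (u - v) := by
  have huv := hM.dotProduct_mulVec_comm u v
  simp only [sqnorm, mulVec_add, mulVec_sub, mulVec_smul, dotProduct_add, add_dotProduct,
    dotProduct_sub, sub_dotProduct, dotProduct_smul, smul_dotProduct, smul_eq_mul, huv]
  ring

/-- Young's inequality `⟪u, v⟫ ≤ ‖u‖²_S / (2τ) + ‖v‖²_{S⁻¹} τ / 2`, followed by `τ λ S⁻¹ ≤ R`. -/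
lemma dotProduct_le_sqnorm_div_add_sqnorm_div {S R : Matrix (Fin m) (Fin m) ℝ} (hS : S.PosDef)
    {τ lam : ℝ} (hτ : 0 < τ) (hlam : 0 < lam) (hPD : (R - (τ * lam) • S⁻¹).PosSemidef)
    (u v : Fin m → ℝ) :
    u ⬝ᵥ v ≤ sqnorm S u / (2 * τ) + sqnorm R v / (2 * lam) := by
  have hSS : S *ᵥ (S⁻¹ *ᵥ v) = v := by
    rw [mulVec_mulVec, mul_nonsing_inv _ (isUnit_iff_ne_zero.2 hS.det_pos.ne'), one_mulVec]
  have hsq : sqnorm S (u - τ • (S⁻¹ *ᵥ v))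
      = sqnorm S u - 2 * τ * (u ⬝ᵥ v) + τ ^ 2 * (v ⬝ᵥ S⁻¹ *ᵥ v) := by
    have hsym := hS.isHermitian.dotProduct_mulVec_comm (S⁻¹ *ᵥ v) u
    simp only [sqnorm, mulVec_sub, mulVec_smul, dotProduct_sub, sub_dotProduct, dotProduct_smul,
      smul_dotProduct, smul_eq_mul, hSS, hsym, dotProduct_comm (S⁻¹ *ᵥ v) v]
    ring
  have h1 := hS.posSemidef.sqnorm_nonneg (u - τ • (S⁻¹ *ᵥ v))
  have h2 : (τ * lam) * (v ⬝ᵥ S⁻¹ *ᵥ v) ≤ sqnorm R v := by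
    have := hPD.dotProduct_mulVec_nonneg v
    simp only [sub_mulVec, smul_mulVec, dotProduct_sub, dotProduct_smul, smul_eq_mul] at this
    exact sub_nonneg.1 this
  have h3 := hS.inv.posSemidef.dotProduct_mulVec_nonneg v
  rw [div_add_div _ _ (by positivity) (by positivity), le_div_iff₀ (by positivity)]
  nlinarith [mul_le_mul_of_nonneg_left h2 hτ.le]

end Matrix

open Topology in
lemma le_of_forall_mem_Ioc_interpolation {a b d τ e : ℝ} (hd : 0 ≤ d) (hτ : 0 < τ) (he : 0 ≤ e)
    (h : ∀ t ∈ Set.Ioc (0 : ℝ) 1, a + (1 - t) * (d ^ 2 / (2 * τ)) - e / t ≤ b) :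
    a + d ^ 2 / (2 * τ) - √(2 * e / τ) * d - e ≤ b := by
  rcases he.eq_or_lt with rfl | he
  · -- with `e = 0` no admissible `t` is optimal, so let `t → 0⁺`
    have hlim : Tendsto (fun t : ℝ => a + (1 - t) * (d ^ 2 / (2 * τ)) - 0 / t) (𝓝[>] 0)
        (𝓝 (a + d ^ 2 / (2 * τ))) := by
      simp only [zero_div, sub_zero]
      exact ((by fun_prop : Continuous fun t : ℝ => a + (1 - t) * (d ^ 2 / (2 * τ))).tendsto'
        0 _ (by ring)).mono_left nhdsWithin_le_nhds
    simpa using le_of_tendsto hlim (eventually_of_mem (Ioc_mem_nhdsGT one_pos) h)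
  set s := √(2 * e / τ)
  have hs : 0 < s := Real.sqrt_pos.2 (by positivity)
  have hes : e = τ * s ^ 2 / 2 := by
    rw [Real.sq_sqrt (by positivity)]
    field_simp
  rcases le_or_gt d (τ * s) with hds | hds
  · -- the unconstrained minimiser `t = τ s / d` lies beyond `1`
    have h1 := h 1 ⟨one_pos, le_rfl⟩
    have : d ^ 2 / (2 * τ) ≤ s * d := by
      rw [div_le_iff₀ (by positivity)]
      nlinarith [mul_le_mul_of_nonneg_left hds hd]
    linarith [div_one e]
  · have hdpos : 0 < d := (by positivity : 0 < τ * s).trans hds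
    have ht := h (τ * s / d) ⟨by positivity, (div_le_one hdpos).2 hds.le⟩
    have key : (1 - τ * s / d) * (d ^ 2 / (2 * τ)) - e / (τ * s / d)
        = d ^ 2 / (2 * τ) - s * d := by
      rw [hes]
      field_simp
      ring
    linarith

section ProxGrowth

variable {m : ℕ} {h : (Fin m → ℝ) → ℝ} {S : Matrix (Fin m) (Fin m) ℝ} {τ e : ℝ} {w z : Fin m → ℝ}

lemma ConvexOn.add_sqnorm_interpolation (hh : ConvexOn ℝ Set.univ h) (hS : S.IsHermitian)
    (hz : ∀ y, h z + sqnorm S (z - w) / (2 * τ) - e ≤ h y + sqnorm S (y - w) / (2 * τ))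
    (y : Fin m → ℝ) {t : ℝ} (ht : t ∈ Set.Ioc (0 : ℝ) 1) :
    h z + sqnorm S (z - w) / (2 * τ) + (1 - t) * (sqnorm S (y - z) / (2 * τ)) - e / t
      ≤ h y + sqnorm S (y - w) / (2 * τ) := by
  obtain ⟨ht0, ht1⟩ := ht
  have hconv : h ((1 - t) • z + t • y) ≤ (1 - t) * h z + t * h y := by
    simpa using hh.2 (Set.mem_univ z) (Set.mem_univ y) (sub_nonneg.2 ht1) ht0.le (by ring)
  have hsq : sqnorm S ((1 - t) • z + t • y - w)
      = (1 - t) * sqnorm S (z - w) + t * sqnorm S (y - w) - t * (1 - t) * sqnorm S (y - z) := by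
    rw [show (1 - t) • z + t • y - w = (1 - t) • (z - w) + t • (y - w) by module,
      hS.sqnorm_sub_add_smul, show z - w - (y - w) = -(y - z) by abel, sqnorm_neg]
  have hp := hz ((1 - t) • z + t • y)
  rw [hsq] at hp
  have key : h y + sqnorm S (y - w) / (2 * τ)
      - (h z + sqnorm S (z - w) / (2 * τ) + (1 - t) * (sqnorm S (y - z) / (2 * τ)) - e / t)
      = (t * (h y + sqnorm S (y - w) / (2 * τ)) - t * (h z + sqnorm S (z - w) / (2 * τ))
          - t * (1 - t) * (sqnorm S (y - z) / (2 * τ)) + e) / t := by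
    field_simp
    ring
  rw [← sub_nonneg, key]
  refine div_nonneg ?_ ht0.le
  linear_combination hp + hconv

lemma ConvexOn.add_sqnorm_growth (hh : ConvexOn ℝ Set.univ h) (hS : S.PosDef) (hτ : 0 < τ)
    (he : 0 ≤ e)
    (hz : ∀ y, h z + sqnorm S (z - w) / (2 * τ) - e ≤ h y + sqnorm S (y - w) / (2 * τ))
    (y : Fin m → ℝ) :
    h z + sqnorm S (z - w) / (2 * τ) + sqnorm S (y - z) / (2 * τ)
        - √(2 * e / τ) * √(sqnorm S (y - z)) - e
      ≤ h y + sqnorm S (y - w) / (2 * τ) := by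
  have hq := Real.sq_sqrt (hS.posSemidef.sqnorm_nonneg (y - z))
  have := le_of_forall_mem_Ioc_interpolation (Real.sqrt_nonneg _) hτ he fun t ht => by
    rw [hq]
    exact hh.add_sqnorm_interpolation hS.isHermitian hz y ht
  rwa [hq] at this

end ProxGrowth

section InexactStep

variable {n m : ℕ}

/-- Conditions (i)–(iii) of one iteration of Algorithm 1, with `(x, yb) = (xᵏ, ȳᵏ)` and
`(x', y', yb') = (xᵏ⁺¹, yᵏ⁺¹, ȳᵏ⁺¹)`. -/
structure IsInexactStep (f : (Fin n → ℝ) → ℝ) (g : (Fin m → ℝ) → ℝ)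
    (A : Matrix (Fin m) (Fin n) ℝ) (S R : Matrix (Fin m) (Fin m) ℝ) (τ lam ε δ : ℝ)
    (x x' : Fin n → ℝ) (y' yb yb' : Fin m → ℝ) : Prop where
  dual_subgrad : ∀ y, g y ≥ g y' +
    ((1 / τ) • S.mulVec (yb - y') + A.mulVec x) ⬝ᵥ (y - y') - ε / 2
  primal_subgrad : ∀ x₁, f x₁ + A.mulVec x₁ ⬝ᵥ y'
    ≥ f x' + A.mulVec x' ⬝ᵥ y' + ((1 / lam) • (Aᵀ * R * A).mulVec (x - x')) ⬝ᵥ (x₁ - x') - δ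
  dual_approx_min : ∀ y, g y - A.mulVec x' ⬝ᵥ y + (1 / (2 * τ)) * sqnorm S (y - yb)
    ≥ g yb' - A.mulVec x' ⬝ᵥ yb' + (1 / (2 * τ)) * sqnorm S (yb' - yb) - ε / 2

namespace IsInexactStep

variable {f : (Fin n → ℝ) → ℝ} {g : (Fin m → ℝ) → ℝ} {A : Matrix (Fin m) (Fin n) ℝ}
  {S R : Matrix (Fin m) (Fin m) ℝ} {τ lam ε δ : ℝ} {x x' : Fin n → ℝ} {y' yb yb' : Fin m → ℝ}

lemma primal_estimate (hst : IsInexactStep f g A S R τ lam ε δ x x' y' yb yb')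
    (hR : R.IsHermitian) (xs : Fin n → ℝ) :
    f x' + A *ᵥ x' ⬝ᵥ y' - f xs - A *ᵥ xs ⬝ᵥ y'
      ≤ δ - (sqnorm R (A *ᵥ (x - x')) + sqnorm R (A *ᵥ (xs - x'))
          - sqnorm R (A *ᵥ (xs - x))) / (2 * lam) := by
  have hpol := hR.two_mul_dotProduct_mulVec (A *ᵥ (x - x')) (A *ᵥ (xs - x'))
  rw [← mulVec_sub, show xs - x' - (x - x') = xs - x by abel] at hpol
  have hAtRA : (Aᵀ * R * A) *ᵥ (x - x') ⬝ᵥ (xs - x') = A *ᵥ (x - x') ⬝ᵥ R *ᵥ A *ᵥ (xs - x') := by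
    rw [← mulVec_mulVec, ← mulVec_mulVec, dotProduct_comm, dotProduct_transpose_mulVec,
      dotProduct_comm, hR.dotProduct_mulVec_comm]
  have := hst.primal_subgrad xs
  rw [smul_dotProduct, hAtRA, smul_eq_mul] at this
  rw [← hpol, mul_div_mul_left _ _ two_ne_zero, ← one_div_mul_eq_div]
  linarith

lemma dual_estimate (hst : IsInexactStep f g A S R τ lam ε δ x x' y' yb yb')
    (hS : S.IsHermitian) :
    g y' - A *ᵥ x ⬝ᵥ y'
        + (sqnorm S (yb - y') + sqnorm S (yb' - y') - sqnorm S (yb' - yb)) / (2 * τ) - ε / 2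
      ≤ g yb' - A *ᵥ x ⬝ᵥ yb' := by
  have hpol := hS.two_mul_dotProduct_mulVec (yb - y') (yb' - y')
  rw [show yb' - y' - (yb - y') = yb' - yb by abel] at hpol
  have := hst.dual_subgrad yb'
  rw [add_dotProduct, smul_dotProduct, smul_eq_mul, dotProduct_comm, ← hS.dotProduct_mulVec_comm,
    dotProduct_sub] at this
  rw [← hpol, mul_div_mul_left _ _ two_ne_zero, ← one_div_mul_eq_div]
  linarith

lemma dual_growth (hst : IsInexactStep f g A S R τ lam ε δ x x' y' yb yb')
    (hg : ConvexOn ℝ Set.univ g) (hS : S.PosDef) (hτ : 0 < τ) (hε : 0 ≤ ε) (ys : Fin m → ℝ) :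
    g yb' - A *ᵥ x' ⬝ᵥ yb' + sqnorm S (yb' - yb) / (2 * τ) + sqnorm S (ys - yb') / (2 * τ)
        - √(ε / τ) * √(sqnorm S (ys - yb')) - ε / 2
      ≤ g ys - A *ᵥ x' ⬝ᵥ ys + sqnorm S (ys - yb) / (2 * τ) := by
  have hconv := hg.sub ((dotProductBilin ℝ ℝ (A *ᵥ x')).concaveOn convex_univ)
  have := hconv.add_sqnorm_growth hS hτ (by positivity : 0 ≤ ε / 2) (w := yb) (z := yb')
    (fun y => by
      have := hst.dual_approx_min y
      simp only [one_div_mul_eq_div] at this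
      simp only [Pi.sub_apply, dotProductBilin_apply_apply]
      linarith) ys
  simp only [Pi.sub_apply, dotProductBilin_apply_apply,
    show 2 * (ε / 2) / τ = ε / τ by ring] at this
  linarith

lemma lag_sub_le (hst : IsInexactStep f g A S R τ lam ε δ x x' y' yb yb')
    (hg : ConvexOn ℝ Set.univ g) (hS : S.PosDef) (hR : R.IsHermitian) (hτ : 0 < τ)
    (hlam : 0 < lam) (hPD : (R - (τ * lam) • S⁻¹).PosSemidef) (hε : 0 ≤ ε)
    (xs : Fin n → ℝ) (ys : Fin m → ℝ) :
    Lag f g A x' ys - Lag f g A xs y'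
      ≤ (sqnorm S (ys - yb) - sqnorm S (ys - yb')) / (2 * τ)
        + (sqnorm R (A *ᵥ (xs - x)) - sqnorm R (A *ᵥ (xs - x'))) / (2 * lam)
        + √(ε / τ) * √(sqnorm S (ys - yb')) + (ε + δ) := by
  have hP := hst.primal_estimate hR xs
  have hD := hst.dual_estimate hS.isHermitian
  have hG := hst.dual_growth hg hS hτ hε ys
  have hY := dotProduct_le_sqnorm_div_add_sqnorm_div hS hτ hlam hPD (y' - yb') (A *ᵥ (x - x'))
  have hcross : (y' - yb') ⬝ᵥ A *ᵥ (x - x')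
      = A *ᵥ x ⬝ᵥ y' - A *ᵥ x' ⬝ᵥ y' - A *ᵥ x ⬝ᵥ yb' + A *ᵥ x' ⬝ᵥ yb' := by
    simp only [mulVec_sub, dotProduct_sub, sub_dotProduct, dotProduct_comm y', dotProduct_comm yb']
    ring
  have hq : 0 ≤ sqnorm S (yb - y') / (2 * τ) := by
    have := hS.posSemidef.sqnorm_nonneg (yb - y'); positivity
  rw [hcross, sqnorm_sub_comm y'] at hY
  simp only [Lag, add_div, sub_div] at hP hD ⊢
  linarith

end IsInexactStep

end InexactStep

lemma sum_sub_div_add_div_le_of_monotone {a v : ℕ → ℝ} (ha : Monotone a) (ha0 : ∀ k, 0 < a k)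
    (hv : ∀ k, 0 ≤ v k) (M : ℕ) :
    ∑ k ∈ range M, (v k - v (k + 1)) / a k + v M / a M ≤ v 0 / a 0 := by
  induction M with
  | zero => simp
  | succ M ih =>
    have : v (M + 1) / a (M + 1) ≤ v (M + 1) / a M :=
      div_le_div_of_nonneg_left (hv _) (ha0 M) (ha M.le_succ)
    rw [sum_range_succ]
    linarith [sub_div (v M) (v (M + 1)) (a M)]

lemma le_add_sqrt_of_sq_le_add_mul {x c T : ℝ} (hc : 0 ≤ c) (hT : 0 ≤ T)
    (h : x ^ 2 ≤ T + c * x) : x ≤ c + √T := by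
  by_contra! hlt
  have hsqrt := Real.sq_sqrt hT
  nlinarith [Real.sqrt_nonneg T]

lemma le_sum_add_sqrt_of_sq_le_sum {u c : ℕ → ℝ} {T : ℝ} (hu : ∀ k, 0 ≤ u k) (hc : ∀ k, 0 ≤ c k)
    (hT : 0 ≤ T) {N : ℕ} (h : ∀ M ≤ N, u M ^ 2 ≤ T + ∑ k ∈ range M, c k * u (k + 1)) :
    ∀ M ≤ N, u M ≤ ∑ k ∈ range N, c k + √T := by
  -- at a maximiser `M₀` of `u` on `[0, N]` the recursion is a quadratic inequality for `u M₀`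
  obtain ⟨M₀, hM₀, hmax⟩ := (range (N + 1)).exists_max_image u nonempty_range_add_one
  have hM₀N : M₀ ≤ N := Nat.lt_succ_iff.1 (mem_range.1 hM₀)
  have hle : ∀ M ≤ N, u M ≤ u M₀ := fun M hM => hmax M (mem_range.2 (Nat.lt_succ_of_le hM))
  have hsum : ∑ k ∈ range M₀, c k * u (k + 1) ≤ (∑ k ∈ range N, c k) * u M₀ := calc
    _ ≤ ∑ k ∈ range M₀, c k * u M₀ := by
      gcongr with k hk
      · exact hc k
      · exact hle _ (by have := mem_range.1 hk; omega)
    _ ≤ (∑ k ∈ range N, c k) * u M₀ := by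
      rw [← sum_mul]
      gcongr
      · exact hu _
      · exact fun k _ _ => hc k
  have hM₀bound : u M₀ ≤ ∑ k ∈ range N, c k + √T :=
    le_add_sqrt_of_sq_le_add_mul (sum_nonneg fun k _ => hc k) hT (by linarith [h M₀ hM₀N])
  exact fun M hM => (hle M hM).trans hM₀bound

lemma add_mul_add_sqrt_le_sq {T D c : ℝ} (hc : 0 ≤ c) (hD : 0 ≤ D) (hT : T ≤ D ^ 2) :
    T + c * (c + √T) ≤ (D + c) ^ 2 := by
  have : √T ≤ D := Real.sqrt_le_iff.2 ⟨hD, hT⟩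
  nlinarith [mul_le_mul_of_nonneg_left this hc]

section Descent

variable {G v w τ lam e r : ℕ → ℝ}

lemma sum_add_div_le_of_descent (hv : ∀ k, 0 ≤ v k) (hw : ∀ k, 0 ≤ w k)
    (hτ : ∀ k, 0 < τ k) (hlam : ∀ k, 0 < lam k) (hτm : Monotone τ) (hlamm : Monotone lam)
    (hdesc : ∀ k, G k ≤ (v k - v (k + 1)) / (2 * τ k) + (w k - w (k + 1)) / (2 * lam k)
      + e k * √(v (k + 1)) + r k) (M : ℕ) :
    ∑ k ∈ range M, G k + v M / (2 * τ M)
      ≤ v 0 / (2 * τ 0) + w 0 / (2 * lam 0) + ∑ k ∈ range M, (e k * √(v (k + 1)) + r k) := by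
  have hsum := sum_le_sum fun k (_ : k ∈ range M) => hdesc k
  simp only [sum_add_distrib] at hsum
  have hv' := sum_sub_div_add_div_le_of_monotone (a := fun k => 2 * τ k)
    (fun _ _ h => by simpa using hτm h) (fun k => by simpa using hτ k) hv M
  have hw' := sum_sub_div_add_div_le_of_monotone (a := fun k => 2 * lam k)
    (fun _ _ h => by simpa using hlamm h) (fun k => by simpa using hlam k) hw M
  have hwM : 0 ≤ w M / (2 * lam M) := div_nonneg (hw M) (by linarith [hlam M])
  rw [sum_add_distrib]
  linarith


lemma sqrt_le_of_sum_add_div_le (hG : ∀ k, 0 ≤ G k) (hv : ∀ k, 0 ≤ v k) (hτ : ∀ k, 0 < τ k)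
    (hτm : Monotone τ) (he : ∀ k, 0 ≤ e k) (hr : ∀ k, 0 ≤ r k) {C : ℝ} (hC : 0 ≤ C)
    (htele : ∀ M, ∑ k ∈ range M, G k + v M / (2 * τ M)
      ≤ C + ∑ k ∈ range M, (e k * √(v (k + 1)) + r k)) (N : ℕ) :
    ∀ M ≤ N, √(v M) ≤ ∑ k ∈ range N, 2 * τ N * e k + √(2 * τ N * (C + ∑ k ∈ range N, r k)) := by
  have hτN := hτ N
  have hrN : 0 ≤ ∑ k ∈ range N, r k := sum_nonneg fun k _ => hr k
  refine le_sum_add_sqrt_of_sq_le_sum (fun _ => Real.sqrt_nonneg _)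
    (fun k => by have := he k; positivity) (by positivity) fun M hM => ?_
  have hGM : 0 ≤ ∑ k ∈ range M, G k := sum_nonneg fun k _ => hG k
  set X := C + ∑ k ∈ range M, (e k * √(v (k + 1)) + r k)
  have hvM : v M / (2 * τ M) ≤ X := by linarith [htele M]
  have hX : 0 ≤ X := (div_nonneg (hv M) (by linarith [hτ M])).trans hvM
  have hτMN : 2 * τ M ≤ 2 * τ N := by linarith [hτm hM]
  calc √(v M) ^ 2 = v M := Real.sq_sqrt (hv M)
    _ ≤ 2 * τ N * X :=
      ((div_le_iff₀' (by linarith [hτ M])).1 hvM).trans (mul_le_mul_of_nonneg_right hτMN hX)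
    _ = 2 * τ N * (C + ∑ k ∈ range M, r k) + ∑ k ∈ range M, 2 * τ N * e k * √(v (k + 1)) := by
      simp only [X, sum_add_distrib, mul_add, mul_sum, mul_assoc]
      ring
    _ ≤ 2 * τ N * (C + ∑ k ∈ range N, r k) + ∑ k ∈ range M, 2 * τ N * e k * √(v (k + 1)) := by
      gcongr
      exact fun k _ _ => hr k

lemma two_mul_sum_le_sq_of_descent (hG : ∀ k, 0 ≤ G k) (hv : ∀ k, 0 ≤ v k) (hw : ∀ k, 0 ≤ w k)
    (hτ : ∀ k, 0 < τ k) (hlam : ∀ k, 0 < lam k) (hτm : Monotone τ) (hlamm : Monotone lam)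
    (he : ∀ k, 0 ≤ e k) (hr : ∀ k, 0 ≤ r k)
    (hdesc : ∀ k, G k ≤ (v k - v (k + 1)) / (2 * τ k) + (w k - w (k + 1)) / (2 * lam k)
      + e k * √(v (k + 1)) + r k) (N : ℕ) :
    2 * τ N * ∑ k ∈ range N, G k
      ≤ (√(τ N / τ 0) * √(v 0) + √(τ N / lam 0) * √(w 0) + 2 * (τ N * ∑ k ∈ range N, e k)
          + √(2 * (τ N * ∑ k ∈ range N, r k))) ^ 2 := by
  have htele := sum_add_div_le_of_descent hv hw hτ hlam hτm hlamm hdesc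
  have hτN := hτ N
  have hτ0 := hτ 0
  have hlam0 := hlam 0
  have hv0 := hv 0
  have hw0 := hw 0
  have hr0 : 0 ≤ ∑ k ∈ range N, r k := sum_nonneg fun k _ => hr k
  set C := v 0 / (2 * τ 0) + w 0 / (2 * lam 0)
  have hC : 0 ≤ C := by positivity
  have hsqrt := sqrt_le_of_sum_add_div_le hG hv hτ hτm he hr hC htele N
  set Λ := ∑ k ∈ range N, 2 * τ N * e k
  set T := 2 * τ N * (C + ∑ k ∈ range N, r k)
  have hΛ : Λ = 2 * (τ N * ∑ k ∈ range N, e k) := by rw [← mul_assoc, mul_sum]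
  have hΛ0 : 0 ≤ Λ := sum_nonneg fun k _ => by have := he k; positivity
  have hsum : 2 * τ N * ∑ k ∈ range N, G k ≤ T + Λ * (Λ + √T) := by
    have hN := htele N
    have hvN : 0 ≤ v N / (2 * τ N) := by have := hv N; positivity
    have he_sqrt : ∑ k ∈ range N, e k * √(v (k + 1)) ≤ (∑ k ∈ range N, e k) * (Λ + √T) := by
      rw [sum_mul]
      exact sum_le_sum fun k hk => mul_le_mul_of_nonneg_left
        (hsqrt (k + 1) (mem_range.1 hk)) (he k)
    rw [sum_add_distrib] at hN
    rw [hΛ] at he_sqrt ⊢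
    nlinarith
  set P := √(τ N / τ 0) * √(v 0)
  set Q := √(τ N / lam 0) * √(w 0)
  set R := √(2 * (τ N * ∑ k ∈ range N, r k))
  have hT : T = P ^ 2 + Q ^ 2 + R ^ 2 := by
    simp only [P, Q, R, T, C, mul_pow, Real.sq_sqrt (by positivity : 0 ≤ τ N / τ 0),
      Real.sq_sqrt hv0, Real.sq_sqrt (by positivity : 0 ≤ τ N / lam 0), Real.sq_sqrt hw0,
      Real.sq_sqrt (by positivity : 0 ≤ 2 * (τ N * ∑ k ∈ range N, r k))]
    field_simp
  have hP : 0 ≤ P := by positivity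
  have hQ : 0 ≤ Q := by positivity
  have hR : 0 ≤ R := by positivity
  calc 2 * τ N * ∑ k ∈ range N, G k ≤ T + Λ * (Λ + √T) := hsum
    _ ≤ (P + Q + R + Λ) ^ 2 :=
      add_mul_add_sqrt_le_sq hΛ0 (by positivity)
        (by rw [hT]; nlinarith [mul_nonneg hP hQ, mul_nonneg hP hR, mul_nonneg hQ hR])
    _ = (P + Q + 2 * (τ N * ∑ k ∈ range N, e k) + R) ^ 2 := by rw [hΛ]; ring

end Descent

section Lagrangian

variable {n m : ℕ} {f : (Fin n → ℝ) → ℝ} {g : (Fin m → ℝ) → ℝ} {A : Matrix (Fin m) (Fin n) ℝ}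

lemma convexOn_lag_left (hf : ConvexOn ℝ Set.univ f) (y : Fin m → ℝ) :
    ConvexOn ℝ Set.univ fun x => Lag f g A x y :=
  ((hf.add ((((dotProductBilin ℝ ℝ).flip y).comp A.mulVecLin).convexOn convex_univ)).add_const
    (-g y)).congr fun x _ => by simp [Lag, sub_eq_add_neg]

lemma concaveOn_lag_right (hg : ConvexOn ℝ Set.univ g) (x : Fin n → ℝ) :
    ConcaveOn ℝ Set.univ fun y => Lag f g A x y :=
  (((dotProductBilin ℝ ℝ (A *ᵥ x)).concaveOn convex_univ).sub hg |>.add_const (f x)).congr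
    fun y _ => by
      simp only [Pi.add_apply, Pi.sub_apply, dotProductBilin_apply_apply, Lag]
      ring

lemma lag_average_sub_le (hf : ConvexOn ℝ Set.univ f) (hg : ConvexOn ℝ Set.univ g) {N : ℕ}
    (hN : N ≠ 0) (x : ℕ → Fin n → ℝ) (y : ℕ → Fin m → ℝ) (xs : Fin n → ℝ) (ys : Fin m → ℝ) :
    Lag f g A ((N : ℝ)⁻¹ • ∑ k ∈ range N, x k) ys - Lag f g A xs ((N : ℝ)⁻¹ • ∑ k ∈ range N, y k)
      ≤ (N : ℝ)⁻¹ * ∑ k ∈ range N, (Lag f g A (x k) ys - Lag f g A xs (y k)) := by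
  have hw₀ : ∀ k ∈ range N, (0 : ℝ) ≤ (N : ℝ)⁻¹ := fun _ _ => by positivity
  have hw₁ : ∑ _k ∈ range N, (N : ℝ)⁻¹ = 1 := by simp [hN]
  have hx := (convexOn_lag_left (g := g) (A := A) hf ys).map_sum_le hw₀ hw₁
    fun k _ => Set.mem_univ (x k)
  have hy := (concaveOn_lag_right (f := f) (A := A) hg xs).le_map_sum hw₀ hw₁
    fun k _ => Set.mem_univ (y k)
  simp only [smul_eq_mul, ← smul_sum, ← mul_sum] at hx hy
  rw [sum_sub_distrib, mul_sub]
  linarith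

lemma IsSaddle.lag_sub_nonneg {xs : Fin n → ℝ} {ys : Fin m → ℝ} (hs : IsSaddle f g A xs ys)
    (x : Fin n → ℝ) (y : Fin m → ℝ) : 0 ≤ Lag f g A x ys - Lag f g A xs y := by
  linarith [(hs x y).1, (hs x y).2]

end Lagrangian

/-- Lemma th3.1: main ergodic bound. -/
theorem main_ergodic_bound {n m : ℕ}
    (f : (Fin n → ℝ) → ℝ) (g : (Fin m → ℝ) → ℝ)
    (hf : ConvexOn ℝ Set.univ f) (hg : ConvexOn ℝ Set.univ g)
    (A : Matrix (Fin m) (Fin n) ℝ)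
    (S R : Matrix (Fin m) (Fin m) ℝ) (hS : S.PosDef) (hR : R.PosDef)
    (τ lam : ℕ → ℝ) (hτpos : ∀ k, 0 < τ k) (hlampos : ∀ k, 0 < lam k)
    (hτmono : Monotone τ) (hlammono : Monotone lam)
    (hPD : ∀ k, (R - (τ k * lam k) • S⁻¹).PosDef)
    (ε δ : ℕ → ℝ) (hεnn : ∀ k, 0 ≤ ε k) (hδnn : ∀ k, 0 ≤ δ k)
    (xseq : ℕ → Fin n → ℝ) (yseq ybar : ℕ → Fin m → ℝ)
    (hi : ∀ k, ∀ y, g y ≥ g (yseq (k+1)) +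
        ((1 / τ k) • S.mulVec (ybar k - yseq (k+1)) + A.mulVec (xseq k)) ⬝ᵥ
          (y - yseq (k+1)) - ε (k+1) / 2)
    (hii : ∀ k, ∀ x, f x + A.mulVec x ⬝ᵥ yseq (k+1)
        ≥ f (xseq (k+1)) + A.mulVec (xseq (k+1)) ⬝ᵥ yseq (k+1)
          + ((1 / lam k) • (Aᵀ * R * A).mulVec (xseq k - xseq (k+1))) ⬝ᵥ
              (x - xseq (k+1)) - δ (k+1))
    (hiii : ∀ k, ∀ y, g y - A.mulVec (xseq (k+1)) ⬝ᵥ y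
          + (1 / (2 * τ k)) * sqnorm S (y - ybar k)
        ≥ g (ybar (k+1)) - A.mulVec (xseq (k+1)) ⬝ᵥ ybar (k+1)
          + (1 / (2 * τ k)) * sqnorm S (ybar (k+1) - ybar k) - ε (k+1) / 2)
    (xstar : Fin n → ℝ) (ystar : Fin m → ℝ)
    (hsaddle : IsSaddle f g A xstar ystar) :
    ∀ N : ℕ, 1 ≤ N →
      Lag f g A ((N : ℝ)⁻¹ • ∑ k ∈ Finset.range N, xseq (k+1)) ystar
          - Lag f g A xstar ((N : ℝ)⁻¹ • ∑ k ∈ Finset.range N, yseq (k+1))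
        ≤ (1 / (2 * N * τ N)) *
            (Real.sqrt (τ N / τ 0) * mnorm S (ystar - ybar 0)
              + Real.sqrt (τ N / lam 0) * mnorm R (A.mulVec (xstar - xseq 0))
              + 2 * (τ N * ∑ j ∈ Finset.range N, Real.sqrt (ε (j+1) / τ j))
              + Real.sqrt (2 * (τ N * ∑ j ∈ Finset.range N, (2 * ε (j+1) + δ (j+1))))) ^ 2 := by
  intro N hN
  have hstep : ∀ k, IsInexactStep f g A S R (τ k) (lam k) (ε (k + 1)) (δ (k + 1))
      (xseq k) (xseq (k + 1)) (yseq (k + 1)) (ybar k) (ybar (k + 1)) :=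
    fun k => ⟨hi k, hii k, hiii k⟩
  have hdesc : ∀ k, Lag f g A (xseq (k + 1)) ystar - Lag f g A xstar (yseq (k + 1))
      ≤ (sqnorm S (ystar - ybar k) - sqnorm S (ystar - ybar (k + 1))) / (2 * τ k)
        + (sqnorm R (A *ᵥ (xstar - xseq k)) - sqnorm R (A *ᵥ (xstar - xseq (k + 1)))) / (2 * lam k)
        + √(ε (k + 1) / τ k) * √(sqnorm S (ystar - ybar (k + 1))) + (2 * ε (k + 1) + δ (k + 1)) :=
    fun k => by
      linarith [hεnn (k + 1), (hstep k).lag_sub_le hg hS hR.isHermitian (hτpos k) (hlampos k)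
        (hPD k).posSemidef (hεnn _) xstar ystar]
  have henergy := two_mul_sum_le_sq_of_descent (fun k => hsaddle.lag_sub_nonneg _ _)
    (fun k => hS.posSemidef.sqnorm_nonneg _) (fun k => hR.posSemidef.sqnorm_nonneg _) hτpos
    hlampos hτmono hlammono (fun k => Real.sqrt_nonneg _)
    (fun k => by linarith [hεnn (k + 1), hδnn (k + 1)]) hdesc N
  have hτN := hτpos N
  calc _ ≤ (N : ℝ)⁻¹ * ∑ k ∈ range N,
        (Lag f g A (xseq (k + 1)) ystar - Lag f g A xstar (yseq (k + 1))) :=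
      lag_average_sub_le hf hg (by omega) _ _ _ _
    _ = (2 * N * τ N)⁻¹ * (2 * τ N * ∑ k ∈ range N,
        (Lag f g A (xseq (k + 1)) ystar - Lag f g A xstar (yseq (k + 1)))) := by
      field_simp
    _ ≤ _ := by
      rw [one_div]
      gcongr
      exact henergy
end
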